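/- For every graph G on n ≥ 3 vertices, 6·p(K3,G) + 6·p(K̄3,G) − 2·p(P3,G) − 2·p(P̄3,G) = s(G) + O(1/n), where s(G) = C(n,3)^{-1} · Σ_{x∈V(G)} (d_G(x) − d_{Ḡ}(x))² ≥ 0; here p(F,G) is the induced density of F in G. In particular, 3·p(K3,G) + 3·p(K̄3,G) ≥ p(P3,G) + p(P̄3,G) − O(1/n). -/

import Mathlib

/-!
Write `σ(x, y) = ±1` according to whether `xy` is an edge, so that
`d_G(x) - d_Ḡ(x) = ∑_{y ≠ x} σ(x, y)`. Squaring, and using `σ² = 1`,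
`(d_G(x) - d_Ḡ(x))² = (n - 1) + 2 ∑_{{y,z}} σ(x, y) σ(x, z)`, a signed count of the cherries
with centre `x`. Regrouping the cherries by the triple `{x, y, z}` they span gives
`∑_x (d_G(x) - d_Ḡ(x))² = n (n - 1) + 2 ∑_X w(X)`, where a triple with edge signs `a, b, c`
has weight `w = ab + bc + ca`: this is `3` on `K₃` and `K̄₃` and `-1` on `P₃` and `P̄₃`.
Hence the density combination equals `s(G) - n (n - 1) / C(n, 3) = s(G) - 6 / (n - 2)` exactly.
-/

/-- The induced density of a 3-vertex graph `F` in a graph `G` on `n` vertices. -/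
noncomputable def triDensity (n : ℕ) (F : SimpleGraph (Fin 3)) (G : SimpleGraph (Fin n)) : ℝ :=
  (Nat.card {X : Finset (Fin n) // X.card = 3 ∧
      Nonempty (G.induce (↑X : Set (Fin n)) ≃g F)} : ℝ) / (n.choose 3 : ℝ)

/-- The path on three vertices `0-1-2`. -/
def pathP3 : SimpleGraph (Fin 3) where
  Adj u v := (u.val = 0 ∧ v.val = 1) ∨ (u.val = 1 ∧ v.val = 0) ∨
    (u.val = 1 ∧ v.val = 2) ∨ (u.val = 2 ∧ v.val = 1)
  symm := ⟨by intro u v h; tauto⟩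
  loopless := ⟨by intro v h; omega⟩

open Finset

namespace Finset

variable {α : Type*} [DecidableEq α]

theorem sum_sum_powersetCard_erase {β : Type*} [AddCommMonoid β] (s : Finset α) (k : ℕ)
    (g : α → Finset α → β) :
    ∑ x ∈ s, ∑ P ∈ powersetCard k (s.erase x), g x P =
      ∑ X ∈ powersetCard (k + 1) s, ∑ x ∈ X, g x (X.erase x) := by
  rw [sum_sigma', sum_sigma']
  refine sum_bij' (fun p _ => ⟨insert p.1 p.2, p.1⟩) (fun p _ => ⟨p.2, p.1.erase p.2⟩)
    ?_ ?_ ?_ ?_ ?_ <;> simp only [mem_sigma, mem_powersetCard, subset_erase]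
  · rintro ⟨x, P⟩ ⟨hx, ⟨hPs, hxP⟩, rfl⟩
    exact ⟨⟨insert_subset hx hPs, card_insert_of_notMem hxP⟩, mem_insert_self x P⟩
  · rintro ⟨X, x⟩ ⟨⟨hXs, hcard⟩, hx⟩
    exact ⟨hXs hx, ⟨(erase_subset x X).trans hXs, notMem_erase x X⟩,
      by rw [card_erase_of_mem hx, hcard, Nat.add_sub_cancel]⟩
  · rintro ⟨x, P⟩ ⟨-, ⟨-, hxP⟩, -⟩
    rw [erase_insert hxP]
  · rintro ⟨X, x⟩ ⟨-, hx⟩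
    rw [insert_erase hx]
  · rintro ⟨x, P⟩ ⟨-, ⟨-, hxP⟩, -⟩
    rw [erase_insert hxP]

theorem sq_sum_eq_sum_sq_add_two_mul_sum_powersetCard {R : Type*} [CommSemiring R]
    (s : Finset α) (f : α → R) :
    (∑ i ∈ s, f i) ^ 2 = ∑ i ∈ s, f i ^ 2 + 2 * ∑ P ∈ powersetCard 2 s, ∏ i ∈ P, f i := by
  have hrow : ∀ i ∈ s, f i * ∑ j ∈ s, f j =
      f i ^ 2 + ∑ Q ∈ powersetCard 1 (s.erase i), f i * ∏ j ∈ Q, f j := by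
    intro i hi
    rw [← add_sum_erase s f hi, powersetCard_one, sum_map, mul_add, mul_sum]
    simp [sq]
  rw [sq, sum_mul, sum_congr rfl hrow, sum_add_distrib, sum_sum_powersetCard_erase, mul_sum]
  refine congrArg _ (sum_congr rfl fun P hP => ?_)
  rw [sum_congr rfl fun i hi => mul_prod_erase P f hi, sum_const, (mem_powersetCard.1 hP).2,
    two_nsmul, two_mul]

end Finset

lemma Nat.cast_choose_three {K : Type*} [Field K] [CharZero K] (n : ℕ) :
    (n.choose 3 : K) = n * (n - 1) * (n - 2) / 6 := by
  simp [Nat.cast_choose_eq_descPochhammer_div, descPochhammer_succ_eval, Nat.factorial]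

namespace SimpleGraph

instance : DecidableRel pathP3.Adj := fun _ _ => inferInstanceAs (Decidable (_ ∨ _ ∨ _ ∨ _))

def fin3Graph (a b c : Bool) : SimpleGraph (Fin 3) where
  Adj i j := ((i = 0 ∧ j = 1 ∨ i = 1 ∧ j = 0) ∧ a) ∨ ((i = 0 ∧ j = 2 ∨ i = 2 ∧ j = 0) ∧ b) ∨
    ((i = 1 ∧ j = 2 ∨ i = 2 ∧ j = 1) ∧ c)
  symm := ⟨by intro i j; tauto⟩
  loopless := ⟨fun i h => by fin_cases i <;> simp at h⟩

instance (a b c : Bool) : DecidableRel (fin3Graph a b c).Adj := fun _ _ =>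
  inferInstanceAs (Decidable (_ ∨ _ ∨ _))

lemma nonempty_iso_iff_exists_perm {V : Type*} (A B : SimpleGraph V) :
    Nonempty (A ≃g B) ↔ ∃ σ : Equiv.Perm V, ∀ i j, A.Adj i j ↔ B.Adj (σ i) (σ j) :=
  ⟨fun ⟨f⟩ => ⟨f.toEquiv, fun _ _ => f.map_adj_iff.symm⟩,
    fun ⟨σ, h⟩ => ⟨⟨σ, fun {i j} => (h i j).symm⟩⟩⟩

lemma fin3Graph_iso_top_iff (a b c : Bool) :
    Nonempty (fin3Graph a b c ≃g (⊤ : SimpleGraph (Fin 3))) ↔ a ∧ b ∧ c := by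
  rw [nonempty_iso_iff_exists_perm]; revert a b c; decide

lemma fin3Graph_iso_bot_iff (a b c : Bool) :
    Nonempty (fin3Graph a b c ≃g (⊥ : SimpleGraph (Fin 3))) ↔ !a ∧ !b ∧ !c := by
  rw [nonempty_iso_iff_exists_perm]; revert a b c; decide

lemma fin3Graph_iso_pathP3_iff (a b c : Bool) :
    Nonempty (fin3Graph a b c ≃g pathP3) ↔ (a ∧ b ∧ !c) ∨ (a ∧ !b ∧ c) ∨ (!a ∧ b ∧ c) := by
  rw [nonempty_iso_iff_exists_perm]; revert a b c; decide

lemma fin3Graph_iso_compl_pathP3_iff (a b c : Bool) :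
    Nonempty (fin3Graph a b c ≃g pathP3ᶜ) ↔ (a ∧ !b ∧ !c) ∨ (!a ∧ b ∧ !c) ∨ (!a ∧ !b ∧ c) := by
  rw [nonempty_iso_iff_exists_perm]; revert a b c; decide

section inducedCount

variable {V : Type*} [Fintype V] (G : SimpleGraph V)

noncomputable def inducedCount {k : ℕ} (F : SimpleGraph (Fin k)) : ℕ :=
  Nat.card {X : Finset V // X.card = k ∧ Nonempty (G.induce (↑X : Set V) ≃g F)}

open Classical in
lemma inducedCount_eq_sum {k : ℕ} (F : SimpleGraph (Fin k)) :
    (G.inducedCount F : ℝ) =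
      ∑ X ∈ powersetCard k (univ : Finset V),
        if Nonempty (G.induce (↑X : Set V) ≃g F) then 1 else 0 := by
  rw [inducedCount, Nat.card_eq_fintype_card, Fintype.card_subtype, sum_boole]
  congr 2
  ext X
  simp

end inducedCount

section adjSign

variable {V : Type*} (G : SimpleGraph V) [DecidableRel G.Adj]

def adjSign (x y : V) : ℝ := if G.Adj x y then 1 else -1

lemma adjSign_comm (x y : V) : G.adjSign x y = G.adjSign y x := by
  simp only [adjSign, G.adj_comm]

lemma adjSign_sq (x y : V) : G.adjSign x y ^ 2 = 1 := by
  unfold adjSign; split_ifs <;> norm_num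

variable [DecidableEq V]

def cherrySum (X : Finset V) : ℝ := ∑ x ∈ X, ∏ y ∈ X.erase x, G.adjSign x y

lemma cherrySum_triple {x y z : V} (hxy : x ≠ y) (hxz : x ≠ z) (hyz : y ≠ z) :
    G.cherrySum {x, y, z} =
      G.adjSign x y * G.adjSign x z + G.adjSign x y * G.adjSign y z +
        G.adjSign x z * G.adjSign y z := by
  rw [cherrySum, sum_insert (by simp [hxy, hxz]), sum_insert (by simp [hyz]), sum_singleton]
  simp [erase_insert_of_ne, erase_insert_eq_erase, hxy, hxz, hyz, G.adjSign_comm y x,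
    G.adjSign_comm z x, G.adjSign_comm z y]
  ring

def tripleEquiv {x y z : V} (hxy : x ≠ y) (hxz : x ≠ z) (hyz : y ≠ z) :
    Fin 3 ≃ (({x, y, z} : Finset V) : Set V) where
  toFun := ![⟨x, by simp⟩, ⟨y, by simp⟩, ⟨z, by simp⟩]
  invFun v := if (v : V) = x then 0 else if (v : V) = y then 1 else 2
  left_inv i := by fin_cases i <;> simp [hxy.symm, hxz.symm, hyz.symm]
  right_inv := by
    rintro ⟨v, hv⟩
    simp only [coe_insert, coe_singleton, Set.mem_insert_iff, Set.mem_singleton_iff] at hv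
    rcases hv with rfl | rfl | rfl <;> simp [hxy.symm, hxz.symm, hyz.symm]

def induceTripleIso {x y z : V} (hxy : x ≠ y) (hxz : x ≠ z) (hyz : y ≠ z) :
    fin3Graph (G.Adj x y) (G.Adj x z) (G.Adj y z) ≃g G.induce ({x, y, z} : Finset V) where
  toEquiv := tripleEquiv hxy hxz hyz
  map_rel_iff' {i j} := by
    fin_cases i <;> fin_cases j <;> simp [tripleEquiv, fin3Graph, G.adj_comm]

open Classical in
lemma two_mul_cherrySum_eq {X : Finset V} (hX : #X = 3) :
    2 * G.cherrySum X =
      6 * (if Nonempty (G.induce (X : Set V) ≃g (⊤ : SimpleGraph (Fin 3))) then 1 else 0) +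
      6 * (if Nonempty (G.induce (X : Set V) ≃g (⊥ : SimpleGraph (Fin 3))) then 1 else 0) -
      2 * (if Nonempty (G.induce (X : Set V) ≃g pathP3) then 1 else 0) -
      2 * (if Nonempty (G.induce (X : Set V) ≃g pathP3ᶜ) then 1 else 0) := by
  obtain ⟨x, y, z, hxy, hxz, hyz, rfl⟩ := card_eq_three.1 hX
  have hiso (F : SimpleGraph (Fin 3)) :
      Nonempty (G.induce (({x, y, z} : Finset V) : Set V) ≃g F) ↔
        Nonempty (fin3Graph (G.Adj x y) (G.Adj x z) (G.Adj y z) ≃g F) :=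
    let e := G.induceTripleIso hxy hxz hyz
    ⟨fun ⟨f⟩ => ⟨e.trans f⟩, fun ⟨f⟩ => ⟨e.symm.trans f⟩⟩
  simp only [hiso, fin3Graph_iso_top_iff, fin3Graph_iso_bot_iff, fin3Graph_iso_pathP3_iff,
    fin3Graph_iso_compl_pathP3_iff, cherrySum_triple G hxy hxz hyz, adjSign]
  by_cases G.Adj x y <;> by_cases G.Adj x z <;> by_cases G.Adj y z <;> simp [*] <;> norm_num

variable [Fintype V]

lemma sum_adjSign_erase (x : V) :
    ∑ y ∈ univ.erase x, G.adjSign x y =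
      (G.degree x : ℝ) - ((Fintype.card V : ℝ) - 1 - (G.degree x : ℝ)) := by
  have hsign : ∀ y, G.adjSign x y = 2 * (if G.Adj x y then 1 else 0) - 1 := fun y => by
    unfold adjSign; split_ifs <;> norm_num
  have hdeg : ∑ y ∈ univ.erase x, (if G.Adj x y then (1 : ℝ) else 0) = G.degree x := by
    rw [sum_erase _ (by simp), sum_boole, ← card_neighborFinset_eq_degree,
      neighborFinset_eq_filter]
  have hV : 1 ≤ Fintype.card V := Fintype.card_pos_iff.2 ⟨x⟩
  simp only [hsign, ← mul_sum, sum_sub_distrib, hdeg, sum_const, card_erase_of_mem (mem_univ x),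
    card_univ, nsmul_eq_mul, mul_one, Nat.cast_sub hV, Nat.cast_one]
  ring

lemma sq_degree_sub_compl_eq (x : V) :
    ((G.degree x : ℝ) - ((Fintype.card V : ℝ) - 1 - (G.degree x : ℝ))) ^ 2 =
      ((Fintype.card V : ℝ) - 1) +
        2 * ∑ P ∈ powersetCard 2 (univ.erase x), ∏ y ∈ P, G.adjSign x y := by
  rw [← sum_adjSign_erase, sq_sum_eq_sum_sq_add_two_mul_sum_powersetCard]
  have hV : 1 ≤ Fintype.card V := Fintype.card_pos_iff.2 ⟨x⟩
  simp only [adjSign_sq, sum_const, card_erase_of_mem (mem_univ x), card_univ, nsmul_eq_mul,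
    mul_one, Nat.cast_sub hV, Nat.cast_one]

lemma sum_sq_degree_sub_compl_eq :
    ∑ x, ((G.degree x : ℝ) - ((Fintype.card V : ℝ) - 1 - (G.degree x : ℝ))) ^ 2 =
      (Fintype.card V : ℝ) * ((Fintype.card V : ℝ) - 1) +
        2 * ∑ X ∈ powersetCard 3 univ, G.cherrySum X := by
  simp only [sq_degree_sub_compl_eq, sum_add_distrib, ← mul_sum, sum_sum_powersetCard_erase,
    cherrySum, sum_const, card_univ, nsmul_eq_mul]

theorem sum_sq_degree_sub_compl_eq_inducedCount :
    ∑ x, ((G.degree x : ℝ) - ((Fintype.card V : ℝ) - 1 - (G.degree x : ℝ))) ^ 2 =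
      (Fintype.card V : ℝ) * ((Fintype.card V : ℝ) - 1) +
        (6 * G.inducedCount (⊤ : SimpleGraph (Fin 3)) +
          6 * G.inducedCount (⊥ : SimpleGraph (Fin 3)) -
          2 * G.inducedCount pathP3 - 2 * G.inducedCount pathP3ᶜ) := by
  classical
  rw [sum_sq_degree_sub_compl_eq, mul_sum,
    sum_congr rfl fun X hX => G.two_mul_cherrySum_eq (mem_powersetCard_univ.1 hX)]
  simp only [inducedCount_eq_sum, sum_add_distrib, sum_sub_distrib, mul_sum]

end adjSign

end SimpleGraph

lemma triDensity_eq_inducedCount_div {n : ℕ} (F : SimpleGraph (Fin 3))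
    (G : SimpleGraph (Fin n)) :
    triDensity n F G = G.inducedCount F / (n.choose 3 : ℝ) := rfl

lemma triDensity_combination {n : ℕ} (hn : 3 ≤ n) (G : SimpleGraph (Fin n))
    [DecidableRel G.Adj] :
    6 * triDensity n ⊤ G + 6 * triDensity n ⊥ G
        - 2 * triDensity n pathP3 G - 2 * triDensity n pathP3ᶜ G =
      (1 / (n.choose 3 : ℝ)) *
          ∑ x : Fin n, ((G.degree x : ℝ) - ((n : ℝ) - 1 - (G.degree x : ℝ))) ^ 2 -
        6 / ((n : ℝ) - 2) := by
  have hn' : (3 : ℝ) ≤ n := by exact_mod_cast hn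
  have hsum := G.sum_sq_degree_sub_compl_eq_inducedCount
  rw [Fintype.card_fin] at hsum
  simp only [triDensity_eq_inducedCount_div, hsum, Nat.cast_choose_three]
  have : (n : ℝ) - 2 ≠ 0 := by linarith
  have : (n : ℝ) - 1 ≠ 0 := by linarith
  have : (n : ℝ) ≠ 0 := by linarith
  field_simp
  ring

theorem stmt_13 :
    ∃ C : ℝ, ∀ n : ℕ, 3 ≤ n → ∀ (G : SimpleGraph (Fin n)) [DecidableRel G.Adj],
      0 ≤ (1 / (n.choose 3 : ℝ)) *
          ∑ x : Fin n, ((G.degree x : ℝ) - ((n : ℝ) - 1 - (G.degree x : ℝ)))^2 ∧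
      |6 * triDensity n ⊤ G + 6 * triDensity n ⊥ G
          - 2 * triDensity n pathP3 G - 2 * triDensity n pathP3ᶜ G
          - (1 / (n.choose 3 : ℝ)) *
              ∑ x : Fin n, ((G.degree x : ℝ) - ((n : ℝ) - 1 - (G.degree x : ℝ)))^2| ≤ C / n ∧
      triDensity n pathP3 G + triDensity n pathP3ᶜ G - C / n ≤
        3 * triDensity n ⊤ G + 3 * triDensity n ⊥ G := by
  refine ⟨18, fun n hn G _ => ?_⟩
  have hn' : (3 : ℝ) ≤ n := by exact_mod_cast hn
  have hsq : 0 ≤ (1 / (n.choose 3 : ℝ)) *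
      ∑ x : Fin n, ((G.degree x : ℝ) - ((n : ℝ) - 1 - (G.degree x : ℝ))) ^ 2 := by positivity
  have herror : 6 / ((n : ℝ) - 2) ≤ 18 / n := by
    rw [div_le_div_iff₀ (by linarith) (by linarith)]; linarith
  have h18 : 0 ≤ 18 / (n : ℝ) := by positivity
  refine ⟨hsq, ?_, ?_⟩
  · rw [triDensity_combination hn, sub_sub_cancel_left, abs_neg,
      abs_of_pos (div_pos (by norm_num) (by linarith))]
    exact herror
  · linarith [triDensity_combination hn G]
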